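/- arXiv:2305.19420 — 4 statements merged into one kernel-verified Lean document; each statement's English description precedes it below -/
import Mathlib

section
/- (Softmax attention equals the mean of the kernel conditional density estimator, equation (E.7) in the proof of Proposition 4.3.) Fix d ≥ 2 and γ > 0, let σ be the uniform surface measure on S^{d−1} ⊂ ℝ^d, and let C₁ = ∫_{S^{d−1}} ⟨a, b⟩ exp(⟨a, b⟩/γ) dσ(a) for any unit b (independent of b). Let k_1,…,k_L ∈ S^{d−1} (keys), v_1,…,v_L ∈ S^{d−1} (values) and q ∈ S^{d−1} (query). Then ∫_{S^{d−1}} v · [ Σ_{ℓ=1}^{L} exp(⟨k_ℓ, q⟩/γ) exp(⟨v_ℓ, v⟩/γ) / Σ_{ℓ=1}^{L} exp(⟨k_ℓ, q⟩/γ) ] dσ(v) = C₁ · Σ_{ℓ=1}^{L} [ exp(⟨k_ℓ, q⟩/γ) / Σ_{j=1}^{L} exp(⟨k_j, q⟩/γ) ] v_ℓ, i.e., the kernel-smoothed conditional mean equals C₁ times the softmax attention output Vᵀ softmax(Kq/γ). -/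
/-!
Let `g : ℝ → ℝ` and `b` a unit vector. The reflection in the line `ℝ b` fixes `b`, preserves the
surface measure and commutes with `w ↦ g ⟪b, w⟫ • w`, so it fixes the vector
`∫ g ⟪b, w⟫ • w dσ(w)`; its fixed vectors are the multiples of `b`, and the coefficient is read off
by pairing with `b`. For `g t = exp (t / γ)` this turns each value kernel into `C₁ • v_ℓ`, and
linearity of the integral in the mixture weights gives the softmax average.
-/

open MeasureTheory Metric Finset
open scoped Pointwise RealInnerProductSpace

noncomputable def sphereSurface (d : ℕ) :
    Measure (sphere (0 : EuclideanSpace ℝ (Fin d)) 1) :=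
  (volume : Measure (EuclideanSpace ℝ (Fin d))).toSphere

namespace LinearIsometryEquiv

variable {E : Type*} [NormedAddCommGroup E] [NormedSpace ℝ E]

def unitSphereHomeomorph (f : E ≃ₗᵢ[ℝ] E) : sphere (0 : E) 1 ≃ₜ sphere (0 : E) 1 :=
  f.toHomeomorph.subtype fun x => by simp

@[simp]
theorem coe_unitSphereHomeomorph_apply (f : E ≃ₗᵢ[ℝ] E) (x : sphere (0 : E) 1) :
    (f.unitSphereHomeomorph x : E) = f x :=
  rfl

theorem coe_image_unitSphereHomeomorph_preimage (f : E ≃ₗᵢ[ℝ] E) (s : Set (sphere (0 : E) 1)) :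
    ((↑) '' (f.unitSphereHomeomorph ⁻¹' s) : Set E) = f ⁻¹' ((↑) '' s) := by
  ext x
  constructor
  · rintro ⟨w, hw, rfl⟩
    exact ⟨_, hw, rfl⟩
  · rintro ⟨y, hy, hyx⟩
    have hx : x ∈ sphere (0 : E) 1 := by
      rw [mem_sphere_zero_iff_norm, ← f.norm_map, ← hyx, norm_eq_of_mem_sphere]
    have hxy : f.unitSphereHomeomorph ⟨x, hx⟩ = y := Subtype.ext hyx.symm
    exact ⟨⟨x, hx⟩, by rwa [Set.mem_preimage, hxy], rfl⟩

theorem preimage_smul_set (f : E ≃ₗᵢ[ℝ] E) (s : Set ℝ) (t : Set E) :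
    f ⁻¹' (s • t) = s • f ⁻¹' t := by
  rw [← f.symm_symm, ← f.symm.image_eq_preimage_symm, ← f.symm.image_eq_preimage_symm,
    ← Set.image2_smul, ← Set.image2_smul]
  exact Set.image_image2_distrib_right fun c x => f.symm.map_smul c x

variable [MeasurableSpace E] [BorelSpace E]

theorem measurePreserving_unitSphereHomeomorph {μ : Measure E} (f : E ≃ₗᵢ[ℝ] E)
    (hf : MeasurePreserving f μ μ) :
    MeasurePreserving f.unitSphereHomeomorph μ.toSphere μ.toSphere := by
  refine ⟨f.unitSphereHomeomorph.continuous.measurable, ?_⟩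
  ext s hs
  rw [Measure.map_apply f.unitSphereHomeomorph.continuous.measurable hs,
    Measure.toSphere_apply' _ (f.unitSphereHomeomorph.continuous.measurable hs),
    Measure.toSphere_apply' _ hs, coe_image_unitSphereHomeomorph_preimage, ← preimage_smul_set]
  congr 1
  exact hf.measure_preimage_equiv (f := f.toHomeomorph.toMeasurableEquiv) _

end LinearIsometryEquiv

section ReflectionInvariant

variable {E : Type*} [NormedAddCommGroup E] [InnerProductSpace ℝ E] [CompleteSpace E]
  [MeasurableSpace E] [BorelSpace E]

theorem integral_comp_inner_smul_of_reflection_invariant {μ : Measure (sphere (0 : E) 1)}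
    (b : sphere (0 : E) 1)
    (hμ : MeasurePreserving (Submodule.reflection (ℝ ∙ (b : E))).unitSphereHomeomorph μ μ)
    {g : ℝ → ℝ} (hg : Integrable (fun w : sphere (0 : E) 1 => g ⟪(b : E), w⟫ • (w : E)) μ) :
    ∫ w, g ⟪(b : E), w⟫ • (w : E) ∂μ = (∫ w, ⟪(b : E), w⟫ * g ⟪(b : E), w⟫ ∂μ) • (b : E) := by
  set R := Submodule.reflection (ℝ ∙ (b : E))
  set I := ∫ w, g ⟪(b : E), w⟫ • (w : E) ∂μ
  have hRb : R b = b :=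
    Submodule.reflection_mem_subspace_eq_self (Submodule.mem_span_singleton_self _)
  have hRI : R I = I := by
    have h := hμ.integral_comp R.unitSphereHomeomorph.measurableEmbedding
      fun w => g ⟪(b : E), w⟫ • (w : E)
    have hR : ∀ w : sphere (0 : E) 1, ⟪(b : E), R w⟫ = ⟪(b : E), w⟫ := fun w => by
      conv_lhs => rw [← hRb]
      exact R.inner_map_map _ _
    simp only [LinearIsometryEquiv.coe_unitSphereHomeomorph_apply, hR, ← R.map_smul] at h
    exact (R.toContinuousLinearEquiv.integral_comp_comm _).symm.trans h
  obtain ⟨c, hc⟩ := Submodule.mem_span_singleton.1 ((Submodule.reflection_eq_self_iff I).1 hRI)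
  have hcI : c = ⟪(b : E), I⟫ := by
    rw [← hc, real_inner_smul_right, real_inner_self_eq_norm_sq, norm_eq_of_mem_sphere]
    ring
  rw [← hc, hcI, ← integral_inner hg]
  simp only [real_inner_smul_right, mul_comm]

end ReflectionInvariant

theorem integrable_comp_inner_smul {E : Type*} [NormedAddCommGroup E] [InnerProductSpace ℝ E]
    [ProperSpace E] [MeasurableSpace E] [BorelSpace E] {μ : Measure (sphere (0 : E) 1)}
    [IsFiniteMeasure μ] (b : E) {g : ℝ → ℝ} (hg : Continuous g) :
    Integrable (fun w : sphere (0 : E) 1 => g ⟪b, w⟫ • (w : E)) μ :=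
  Continuous.integrable_of_hasCompactSupport (by fun_prop) (.of_compactSpace _)

instance (d : ℕ) : IsFiniteMeasure (sphereSurface d) :=
  inferInstanceAs (IsFiniteMeasure (volume : Measure (EuclideanSpace ℝ (Fin d))).toSphere)

theorem measurePreserving_sphereSurface {d : ℕ}
    (f : EuclideanSpace ℝ (Fin d) ≃ₗᵢ[ℝ] EuclideanSpace ℝ (Fin d)) :
    MeasurePreserving f.unitSphereHomeomorph (sphereSurface d) (sphereSurface d) :=
  f.measurePreserving_unitSphereHomeomorph f.measurePreserving

theorem integral_sum_mul_smul {X E ι : Type*} [MeasurableSpace X] {μ : Measure X}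
    [NormedAddCommGroup E] [NormedSpace ℝ E] (s : Finset ι) (p : ι → ℝ) {f : ι → X → ℝ}
    {F : X → E} (hf : ∀ i ∈ s, Integrable (fun x => f i x • F x) μ) :
    ∫ x, (∑ i ∈ s, p i * f i x) • F x ∂μ = ∑ i ∈ s, p i • ∫ x, f i x • F x ∂μ := by
  simp only [sum_smul, mul_smul]
  rw [integral_finsetSum (f := fun i x => p i • f i x • F x) s fun i hi => (hf i hi).smul (p i)]
  simp only [integral_smul]

theorem softmax_attention_eq_kernel_smoother_mean_general
    (d : ℕ) (γ : ℝ) (C₁ : ℝ)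
    (hC₁ : ∀ b : sphere (0 : EuclideanSpace ℝ (Fin d)) 1,
      C₁ = ∫ a : sphere (0 : EuclideanSpace ℝ (Fin d)) 1,
          (inner ℝ (a : EuclideanSpace ℝ (Fin d)) (b : EuclideanSpace ℝ (Fin d)) : ℝ) *
            Real.exp ((inner ℝ (a : EuclideanSpace ℝ (Fin d))
              (b : EuclideanSpace ℝ (Fin d)) : ℝ) / γ) ∂(sphereSurface d))
    (L : ℕ)
    (k v : Fin L → sphere (0 : EuclideanSpace ℝ (Fin d)) 1)
    (q : sphere (0 : EuclideanSpace ℝ (Fin d)) 1) :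
    (∫ w : sphere (0 : EuclideanSpace ℝ (Fin d)) 1,
        ((∑ l : Fin L,
            Real.exp ((inner ℝ (k l : EuclideanSpace ℝ (Fin d))
              (q : EuclideanSpace ℝ (Fin d)) : ℝ) / γ) *
            Real.exp ((inner ℝ (v l : EuclideanSpace ℝ (Fin d))
              (w : EuclideanSpace ℝ (Fin d)) : ℝ) / γ)) /
          (∑ l : Fin L,
            Real.exp ((inner ℝ (k l : EuclideanSpace ℝ (Fin d))
              (q : EuclideanSpace ℝ (Fin d)) : ℝ) / γ))) •
          (w : EuclideanSpace ℝ (Fin d)) ∂(sphereSurface d))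
      = C₁ •
        ∑ l : Fin L,
          (Real.exp ((inner ℝ (k l : EuclideanSpace ℝ (Fin d))
              (q : EuclideanSpace ℝ (Fin d)) : ℝ) / γ) /
            ∑ j : Fin L,
              Real.exp ((inner ℝ (k j : EuclideanSpace ℝ (Fin d))
                (q : EuclideanSpace ℝ (Fin d)) : ℝ) / γ)) •
            (v l : EuclideanSpace ℝ (Fin d)) := by
  have hint (b : sphere (0 : EuclideanSpace ℝ (Fin d)) 1) :=
    integrable_comp_inner_smul (μ := sphereSurface d) (b : EuclideanSpace ℝ (Fin d))
      (g := fun t => Real.exp (t / γ)) (by fun_prop)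
  have hkernel (b : sphere (0 : EuclideanSpace ℝ (Fin d)) 1) :
      ∫ w, Real.exp (⟪(b : EuclideanSpace ℝ (Fin d)), w⟫ / γ) • (w : EuclideanSpace ℝ (Fin d))
        ∂sphereSurface d = C₁ • (b : EuclideanSpace ℝ (Fin d)) := by
    rw [integral_comp_inner_smul_of_reflection_invariant (g := fun t => Real.exp (t / γ)) b
      (measurePreserving_sphereSurface _) (hint b), hC₁ b]
    simp_rw [real_inner_comm (b : EuclideanSpace ℝ (Fin d))]
  simp only [sum_div, mul_div_right_comm]
  rw [integral_sum_mul_smul _ _ fun l _ => hint (v l)]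
  simp only [hkernel, smul_sum, smul_comm C₁]

theorem softmax_attention_eq_kernel_smoother_mean
    (d : ℕ) (hd : 2 ≤ d) (γ : ℝ) (hγ : 0 < γ) (C₁ : ℝ)
    (hC₁ : ∀ b : sphere (0 : EuclideanSpace ℝ (Fin d)) 1,
      C₁ = ∫ a : sphere (0 : EuclideanSpace ℝ (Fin d)) 1,
          (inner ℝ (a : EuclideanSpace ℝ (Fin d)) (b : EuclideanSpace ℝ (Fin d)) : ℝ) *
            Real.exp ((inner ℝ (a : EuclideanSpace ℝ (Fin d))
              (b : EuclideanSpace ℝ (Fin d)) : ℝ) / γ) ∂(sphereSurface d))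
    (L : ℕ) (hL : 0 < L)
    (k v : Fin L → sphere (0 : EuclideanSpace ℝ (Fin d)) 1)
    (q : sphere (0 : EuclideanSpace ℝ (Fin d)) 1) :
    (∫ w : sphere (0 : EuclideanSpace ℝ (Fin d)) 1,
        ((∑ l : Fin L,
            Real.exp ((inner ℝ (k l : EuclideanSpace ℝ (Fin d))
              (q : EuclideanSpace ℝ (Fin d)) : ℝ) / γ) *
            Real.exp ((inner ℝ (v l : EuclideanSpace ℝ (Fin d))
              (w : EuclideanSpace ℝ (Fin d)) : ℝ) / γ)) /
          (∑ l : Fin L,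
            Real.exp ((inner ℝ (k l : EuclideanSpace ℝ (Fin d))
              (q : EuclideanSpace ℝ (Fin d)) : ℝ) / γ))) •
          (w : EuclideanSpace ℝ (Fin d)) ∂(sphereSurface d))
      = C₁ •
        ∑ l : Fin L,
          (Real.exp ((inner ℝ (k l : EuclideanSpace ℝ (Fin d))
              (q : EuclideanSpace ℝ (Fin d)) : ℝ) / γ) /
            ∑ j : Fin L,
              Real.exp ((inner ℝ (k j : EuclideanSpace ℝ (Fin d))
                (q : EuclideanSpace ℝ (Fin d)) : ℝ) / γ)) •
            (v l : EuclideanSpace ℝ (Fin d)) :=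
  softmax_attention_eq_kernel_smoother_mean_general d γ C₁ hC₁ L k v q
end

section
/- (Posterior concentration implies predictive accuracy, key deterministic step (equation G.2–G.3) in the proof of Proposition 6.3.) Let 𝔷 be a finite set with a distinguished element z*, let p : 𝔷 → ℝ be a prior with p(z) ≥ 0, Σ_z p(z) = 1 and p(z*) ≥ c₁ > 0. Let R be a finite set and for each z ∈ 𝔷 let P(·|z) : R → [0,1] be a probability distribution. Let L : 𝔷 → ℝ≥0 be likelihood weights with L(z*) > 0, and suppose ε ≥ 0 satisfies L(z) ≤ ε · L(z*) for every z ≠ z*. Define the Bayesian model average P̄(r) = Σ_z P(r|z) · [p(z)L(z) / Σ_{z'} p(z')L(z')]. Then the total variation distance satisfies TV(P̄, P(·|z*)) ≤ ε / c₁. -/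
open Finset

/- **Posterior concentration implies predictive accuracy** (equations (G.2)–(G.3) in the
proof of Proposition 6.3): if the likelihood weight of every concept `z ≠ z*` is at most
`ε` times that of `z*`, and the prior puts mass at least `c₁` on `z*`, then the Bayesian
model average predictive distribution is within total variation `ε / c₁` of the
predictive distribution under `z*`. -/
theorem posterior_concentration_tv_bound
    {𝔷 R : Type*} [Fintype 𝔷] [Fintype R]
    (zstar : 𝔷)
    (p : 𝔷 → ℝ) (hp : ∀ z, 0 ≤ p z) (hpsum : ∑ z, p z = 1)
    (c₁ : ℝ) (hc₁ : 0 < c₁) (hpzstar : c₁ ≤ p zstar)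
    (P : 𝔷 → R → ℝ) (hP0 : ∀ z r, 0 ≤ P z r) (hP1 : ∀ z r, P z r ≤ 1)
    (hPsum : ∀ z, ∑ r, P z r = 1)
    (L : 𝔷 → ℝ) (hL : ∀ z, 0 ≤ L z) (hLzstar : 0 < L zstar)
    (ε : ℝ) (hε : 0 ≤ ε) (hdom : ∀ z, z ≠ zstar → L z ≤ ε * L zstar) :
    (1 / 2) * ∑ r, |(∑ z, P z r * (p z * L z / ∑ z', p z' * L z')) - P zstar r|
      ≤ ε / c₁ := by
  classical
  set W := ∑ z', p z' * L z' with hWdef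
  have hterm : ∀ z, 0 ≤ p z * L z := fun z => mul_nonneg (hp z) (hL z)
  have hW1 : c₁ * L zstar ≤ W :=
    le_trans (mul_le_mul_of_nonneg_right hpzstar hLzstar.le)
      (Finset.single_le_sum (fun z _ => hterm z) (mem_univ zstar))
  have hWpos : 0 < W := lt_of_lt_of_le (mul_pos hc₁ hLzstar) hW1
  have hw0 : ∀ z, 0 ≤ p z * L z / W := fun z => div_nonneg (hterm z) hWpos.le
  have hwsum : ∑ z, p z * L z / W = 1 := by
    rw [← Finset.sum_div, ← hWdef, div_self hWpos.ne']
  -- pointwise bound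
  have key : ∀ r, |(∑ z, P z r * (p z * L z / W)) - P zstar r|
      ≤ ∑ z, (p z * L z / W) * |P z r - P zstar r| := by
    intro r
    have heq : (∑ z, P z r * (p z * L z / W)) - P zstar r
        = ∑ z, (p z * L z / W) * (P z r - P zstar r) := by
      simp only [mul_sub]
      rw [Finset.sum_sub_distrib, ← Finset.sum_mul, hwsum, one_mul]
      congr 1
      exact Finset.sum_congr rfl fun z _ => mul_comm _ _
    rw [heq]
    refine le_trans (Finset.abs_sum_le_sum_abs _ _) ?_
    refine Finset.sum_le_sum fun z _ => ?_
    rw [abs_mul, abs_of_nonneg (hw0 z)]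
  have hTV2 : ∀ z, ∑ r, |P z r - P zstar r| ≤ 2 := by
    intro z
    calc ∑ r, |P z r - P zstar r| ≤ ∑ r, (P z r + P zstar r) := by
          refine Finset.sum_le_sum fun r _ => ?_
          refine le_trans (abs_sub _ _) ?_
          rw [abs_of_nonneg (hP0 z r), abs_of_nonneg (hP0 zstar r)]
      _ = 2 := by rw [Finset.sum_add_distrib, hPsum, hPsum]; norm_num
  have hwz : ∀ z, z ≠ zstar → p z * L z / W ≤ ε * p z / c₁ := by
    intro z hz
    rw [div_le_div_iff₀ hWpos hc₁]
    have h2 : ε * p z * (c₁ * L zstar) ≤ ε * p z * W :=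
      mul_le_mul_of_nonneg_left hW1 (mul_nonneg hε (hp z))
    have h3 : p z * c₁ * L z ≤ p z * c₁ * (ε * L zstar) :=
      mul_le_mul_of_nonneg_left (hdom z hz) (mul_nonneg (hp z) hc₁.le)
    nlinarith [h2, h3]
  calc (1 / 2) * ∑ r, |(∑ z, P z r * (p z * L z / W)) - P zstar r|
      ≤ (1 / 2) * ∑ r, ∑ z, (p z * L z / W) * |P z r - P zstar r| := by
        have := Finset.sum_le_sum (fun r (_ : r ∈ (univ : Finset R)) => key r)
        linarith
    _ = (1 / 2) * ∑ z, (p z * L z / W) * ∑ r, |P z r - P zstar r| := by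
        rw [Finset.sum_comm]
        congr 1
        exact Finset.sum_congr rfl fun z _ => by rw [Finset.mul_sum]
    _ ≤ (1 / 2) * ∑ z, (if z = zstar then 0 else 2 * (ε * p z / c₁)) := by
        have h : ∀ z ∈ (univ : Finset 𝔷),
            (p z * L z / W) * ∑ r, |P z r - P zstar r|
            ≤ (if z = zstar then 0 else 2 * (ε * p z / c₁)) := by
          intro z _
          by_cases hz : z = zstar
          · subst hz; simp
          · simp only [if_neg hz]
            have := mul_le_mul (hwz z hz) (hTV2 z)
              (Finset.sum_nonneg fun r _ => abs_nonneg _)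
              (div_nonneg (mul_nonneg hε (hp z)) hc₁.le)
            linarith
        have := Finset.sum_le_sum h
        linarith
    _ ≤ ε / c₁ := by
        have h1 : ∑ z, (if z = zstar then 0 else 2 * (ε * p z / c₁))
            ≤ ∑ z, 2 * (ε * p z / c₁) := by
          refine Finset.sum_le_sum fun z _ => ?_
          by_cases hz : z = zstar
          · simp only [if_pos hz]
            exact mul_nonneg (by norm_num) (div_nonneg (mul_nonneg hε (hp z)) hc₁.le)
          · simp only [if_neg hz]
            exact le_refl _
        have h2 : ∑ z, 2 * (ε * p z / c₁) = 2 * (ε / c₁) := by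
          have hz : ∀ z, 2 * (ε * p z / c₁) = (2 * (ε / c₁)) * p z := fun z => by ring
          simp_rw [hz]
          rw [← Finset.mul_sum, hpsum, mul_one]
        linarith
end

section
/- (Lemma H.7: total variation controls KL divergence under a bounded log-likelihood ratio.) Let p and q be probability mass functions on a finite set X with q(x) > 0 and p(x) > 0 for all x, and let b = max_{x ∈ X} log(p(x)/q(x)) (assume b ≥ 0). Then the Kullback–Leibler divergence satisfies KL(p‖q) := Σ_x p(x) log(p(x)/q(x)) ≤ 2(3 + b) · TV(p, q), where TV(p,q) = sup_{A ⊆ X} |p(A) − q(A)| = (1/2)Σ_x |p(x) − q(x)|. -/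
/- **Lemma H.7 (total variation controls KL under a bounded log-likelihood ratio).**
For probability mass functions `p, q` on a finite set with `p, q > 0` everywhere and
`b = max_x log (p x / q x) ≥ 0`, one has `KL(p‖q) ≤ 2(3 + b) · TV(p, q)`,
where `TV(p,q) = (1/2) Σ_x |p x − q x|`. -/
theorem kl_le_two_three_add_b_mul_tv
    {X : Type*} [Fintype X] [Nonempty X]
    (p q : X → ℝ) (hp : ∀ x, 0 < p x) (hq : ∀ x, 0 < q x)
    (hpsum : ∑ x, p x = 1) (hqsum : ∑ x, q x = 1)
    (b : ℝ) (hb : b = ⨆ x, Real.log (p x / q x)) (hb0 : 0 ≤ b) :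
    ∑ x, p x * Real.log (p x / q x)
      ≤ 2 * (3 + b) * ((1 / 2) * ∑ x, |p x - q x|) := by
  have hlog : ∀ x, Real.log (p x / q x) ≤ b := by
    intro x
    rw [hb]
    exact le_ciSup (Set.Finite.bddAbove (Set.finite_range (fun x => Real.log (p x / q x)))) x
  -- pointwise bound
  have key : ∀ x, p x * Real.log (p x / q x) - (p x - q x) ≤ (1 + b) * |p x - q x| := by
    intro x
    set L := Real.log (p x / q x) with hL
    have hqx := hq x
    have hpx := hp x
    rcases le_or_gt (q x) (p x) with h | h
    · -- p ≥ q : L ≥ 0, L ≤ b, and q*L ≤ p - q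
      have habs : |p x - q x| = p x - q x := abs_of_nonneg (by linarith)
      have hle : L ≤ p x / q x - 1 := Real.log_le_sub_one_of_pos (by positivity)
      have hqL : q x * L ≤ p x - q x := by
        have := mul_le_mul_of_nonneg_left hle hqx.le
        rw [mul_sub, mul_div_cancel₀ _ hqx.ne', mul_one] at this
        linarith
      have hL0 : 0 ≤ L := by
        rw [hL]
        apply Real.log_nonneg
        rw [le_div_iff₀ hqx]
        linarith
      have h1 : (p x - q x) * L ≤ (p x - q x) * b :=
        mul_le_mul_of_nonneg_left (hlog x) (by linarith)
      have : p x * L = (p x - q x) * L + q x * L := by ring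
      rw [habs]
      nlinarith
    · -- p < q : L < 0 so p*L ≤ 0
      have habs : |p x - q x| = q x - p x := by
        rw [abs_of_nonpos (by linarith)]; ring
      have hLneg : L ≤ 0 := by
        rw [hL]
        apply Real.log_nonpos (by positivity)
        rw [div_le_one hqx]
        linarith
      have hpL : p x * L ≤ 0 := mul_nonpos_of_nonneg_of_nonpos hpx.le hLneg
      rw [habs]
      nlinarith
  have hsum0 : ∑ x, (p x - q x) = 0 := by
    rw [Finset.sum_sub_distrib, hpsum, hqsum]; ring
  have h1 : ∑ x, p x * Real.log (p x / q x)
      = ∑ x, (p x * Real.log (p x / q x) - (p x - q x)) := by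
    rw [Finset.sum_sub_distrib, hsum0]; ring
  have h2 : ∑ x, (p x * Real.log (p x / q x) - (p x - q x))
      ≤ ∑ x, (1 + b) * |p x - q x| :=
    Finset.sum_le_sum fun x _ => key x
  have h3 : ∑ x, (1 + b) * |p x - q x| = (1 + b) * ∑ x, |p x - q x| := by
    rw [Finset.mul_sum]
  have habs_nonneg : 0 ≤ ∑ x, |p x - q x| :=
    Finset.sum_nonneg fun x _ => abs_nonneg _
  have : 2 * (3 + b) * ((1 / 2) * ∑ x, |p x - q x|) = (3 + b) * ∑ x, |p x - q x| := by
    ring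
  rw [this, h1]
  calc ∑ x, (p x * Real.log (p x / q x) - (p x - q x))
      ≤ (1 + b) * ∑ x, |p x - q x| := by rw [← h3]; exact h2
    _ ≤ (3 + b) * ∑ x, |p x - q x| := by nlinarith
end

section
/- (Final-layer total variation bound, the first step in the proof of Proposition F.1.) Let τ ∈ (0,1], L ≥ 1, and let X, X̃ ∈ ℝ^{L×d} satisfy ‖Xᵀ‖_{2,∞} ≤ 1 and ‖X̃ᵀ‖_{2,∞} ≤ 1 (every row has Euclidean norm at most 1). Let A, Ã ∈ ℝ^{d×d_y}, and define the output distributions P = softmax( (1/(Lτ)) 𝟙_Lᵀ X A ) and P̃ = softmax( (1/(Lτ)) 𝟙_Lᵀ X̃ Ã ) in ℝ^{d_y}, where 𝟙_L ∈ ℝ^L is the all-ones vector. Then TV(P, P̃) := (1/2)‖P − P̃‖₁ ≤ (2/τ) [ ‖Aᵀ‖_{1,2} · ‖Xᵀ − X̃ᵀ‖_{2,∞} + ‖Aᵀ − Ãᵀ‖_{1,2} ], where ‖Mᵀ‖_{1,2} = (Σ_i ‖M_{i,:}‖₁²)^{1/2} for M with rows M_{i,:}, and ‖Mᵀ‖_{2,∞}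 = max_i ‖M_{i,:}‖₂. -/
/-!
Split `XA − X̃Ã = (X − X̃)A + X̃(A − Ã)`. By Cauchy–Schwarz, row `i` of `X − X̃` against column `j`
of `A` contributes at most `‖Xᵀ − X̃ᵀ‖_{2,∞} ‖Aᵀ‖_{1,2}`, and row `i` of `X̃` (norm `≤ 1`) against
column `j` of `A − Ã` at most `‖Aᵀ − Ãᵀ‖_{1,2}`; averaging over the `L` rows, every logit moves by
at most `ε = (‖Aᵀ‖_{1,2} ‖Xᵀ − X̃ᵀ‖_{2,∞} + ‖Aᵀ − Ãᵀ‖_{1,2}) / τ`. Perturbing all logits by at most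
`ε` changes each softmax probability by a factor in `[e^{-2ε}, e^{2ε}]`, whence
`‖P − P̃‖₁ ≤ 2 (1 − e^{-2ε}) ≤ 4ε`.
-/

open Finset

/-- The softmax of a vector `u ∈ ℝⁿ`. -/
noncomputable def softmaxVec {n : ℕ} (u : Fin n → ℝ) : Fin n → ℝ :=
  fun i => Real.exp (u i) / ∑ j, Real.exp (u j)

/-- `‖Mᵀ‖_{2,∞}`: the maximum Euclidean norm of the rows of `M`. -/
noncomputable def maxRowEuclideanNorm {L d : ℕ} (M : Matrix (Fin L) (Fin d) ℝ) : ℝ :=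
  ⨆ i : Fin L, Real.sqrt (∑ j, (M i j) ^ 2)

/-- `‖Aᵀ‖_{1,2} = (Σ_i ‖A_{i,:}‖₁²)^{1/2}`, the `(1,2)`-mixed norm of the transpose. -/
noncomputable def rowOneTwoNorm {d dy : ℕ} (A : Matrix (Fin d) (Fin dy) ℝ) : ℝ :=
  Real.sqrt (∑ i, (∑ j, |A i j|) ^ 2)

/-- The readout logits `(1/(Lτ)) 𝟙_Lᵀ X A ∈ ℝ^{d_y}`. -/
noncomputable def readoutLogits {L d dy : ℕ} (τ : ℝ) (X : Matrix (Fin L) (Fin d) ℝ)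
    (A : Matrix (Fin d) (Fin dy) ℝ) : Fin dy → ℝ :=
  fun j => (1 / ((L : ℝ) * τ)) * ∑ i, ∑ k, X i k * A k j

section Softmax

variable {n : ℕ}

lemma softmaxVec_nonneg (u : Fin n → ℝ) (j : Fin n) : 0 ≤ softmaxVec u j := by
  unfold softmaxVec; positivity

lemma sum_softmaxVec_le_one (u : Fin n → ℝ) : ∑ j, softmaxVec u j ≤ 1 := by
  simp only [softmaxVec, ← Finset.sum_div]
  exact div_self_le_one _

lemma exp_neg_two_mul_mul_softmaxVec_le {u v : Fin n → ℝ} {ε : ℝ}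
    (h : ∀ j, |u j - v j| ≤ ε) (j : Fin n) :
    Real.exp (-(2 * ε)) * softmaxVec u j ≤ softmaxVec v j := by
  have hT : ∑ k, Real.exp (v k) ≤ Real.exp ε * ∑ k, Real.exp (u k) := by
    rw [Finset.mul_sum]
    refine Finset.sum_le_sum fun k _ => ?_
    rw [← Real.exp_add]
    exact Real.exp_le_exp.mpr (by linarith [(abs_le.mp (h k)).1])
  have hj : Real.exp (u j - ε) ≤ Real.exp (v j) :=
    Real.exp_le_exp.mpr (by linarith [(abs_le.mp (h j)).2])
  calc Real.exp (-(2 * ε)) * softmaxVec u j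
      = Real.exp (u j - ε) / (Real.exp ε * ∑ k, Real.exp (u k)) := by
        unfold softmaxVec
        rw [div_mul_eq_div_div, ← Real.exp_sub, ← mul_div_assoc, ← Real.exp_add]
        ring_nf
    _ ≤ Real.exp (v j) / ∑ k, Real.exp (v k) := by
        gcongr
        exact Finset.sum_pos (fun k _ => Real.exp_pos _) ⟨j, Finset.mem_univ j⟩

lemma sum_abs_softmaxVec_sub_le {u v : Fin n → ℝ} {ε : ℝ} (hε : 0 ≤ ε)
    (h : ∀ j, |u j - v j| ≤ ε) :
    ∑ j, |softmaxVec u j - softmaxVec v j| ≤ 4 * ε := by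
  set c := Real.exp (-(2 * ε))
  have hc : c ≤ 1 := Real.exp_le_one_iff.mpr (by linarith)
  have hpoint : ∀ j, |softmaxVec u j - softmaxVec v j|
      ≤ (softmaxVec u j + softmaxVec v j) * (1 - c) := by
    intro j
    have huv := exp_neg_two_mul_mul_softmaxVec_le h j
    have hvu := exp_neg_two_mul_mul_softmaxVec_le (u := v) (v := u)
      (fun k => abs_sub_comm (u k) (v k) ▸ h k) j
    have := softmaxVec_nonneg u j
    have := softmaxVec_nonneg v j
    exact abs_le.mpr ⟨by nlinarith, by nlinarith⟩
  calc ∑ j, |softmaxVec u j - softmaxVec v j|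
      ≤ (∑ j, softmaxVec u j + ∑ j, softmaxVec v j) * (1 - c) := by
        rw [← Finset.sum_add_distrib, Finset.sum_mul]
        exact Finset.sum_le_sum fun j _ => hpoint j
    _ ≤ 2 * (1 - c) := by
        gcongr
        linarith [sum_softmaxVec_le_one u, sum_softmaxVec_le_one v]
    _ ≤ 4 * ε := by linarith [Real.add_one_le_exp (-(2 * ε))]

end Softmax

lemma abs_sum_mul_le_sqrt_mul_sqrt {ι : Type*} (s : Finset ι) (f g : ι → ℝ) :
    |∑ i ∈ s, f i * g i| ≤ √(∑ i ∈ s, f i ^ 2) * √(∑ i ∈ s, g i ^ 2) := by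
  rw [← Real.sqrt_sq_eq_abs, ← Real.sqrt_mul (by positivity)]
  exact Real.sqrt_le_sqrt (Finset.sum_mul_sq_le_sq_mul_sq _ _ _)

lemma sqrt_sum_sq_le_maxRowEuclideanNorm {L d : ℕ} (M : Matrix (Fin L) (Fin d) ℝ) (i : Fin L) :
    √(∑ j, M i j ^ 2) ≤ maxRowEuclideanNorm M :=
  le_ciSup (f := fun i => √(∑ j, M i j ^ 2)) (Finite.bddAbove_range _) i

lemma maxRowEuclideanNorm_nonneg {L d : ℕ} (M : Matrix (Fin L) (Fin d) ℝ) :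
    0 ≤ maxRowEuclideanNorm M :=
  Real.iSup_nonneg fun _ => Real.sqrt_nonneg _

lemma rowOneTwoNorm_nonneg {d n : ℕ} (A : Matrix (Fin d) (Fin n) ℝ) : 0 ≤ rowOneTwoNorm A :=
  Real.sqrt_nonneg _

lemma sqrt_sum_col_sq_le_rowOneTwoNorm {d n : ℕ} (A : Matrix (Fin d) (Fin n) ℝ) (j : Fin n) :
    √(∑ k, A k j ^ 2) ≤ rowOneTwoNorm A := by
  refine Real.sqrt_le_sqrt (Finset.sum_le_sum fun k _ => ?_)
  rw [← sq_abs]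
  gcongr
  exact Finset.single_le_sum (f := fun j' => |A k j'|) (fun _ _ => abs_nonneg _)
    (Finset.mem_univ j)

lemma abs_mul_apply_le {m d n : ℕ} (M : Matrix (Fin m) (Fin d) ℝ)
    (A : Matrix (Fin d) (Fin n) ℝ) (i : Fin m) (j : Fin n) :
    |(M * A) i j| ≤ √(∑ k, M i k ^ 2) * rowOneTwoNorm A := by
  rw [Matrix.mul_apply]
  exact (abs_sum_mul_le_sqrt_mul_sqrt _ _ _).trans
    (by gcongr; exact sqrt_sum_col_sq_le_rowOneTwoNorm A j)

lemma abs_mul_add_mul_apply_le {m d n : ℕ} {M N : Matrix (Fin m) (Fin d) ℝ} {i : Fin m}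
    (hN : √(∑ k, N i k ^ 2) ≤ 1) (A B : Matrix (Fin d) (Fin n) ℝ) (j : Fin n) :
    |(M * A + N * B) i j| ≤ rowOneTwoNorm A * maxRowEuclideanNorm M + rowOneTwoNorm B := by
  have hMA := abs_mul_apply_le M A i j
  have hNB := abs_mul_apply_le N B i j
  have hM := sqrt_sum_sq_le_maxRowEuclideanNorm M i
  have := rowOneTwoNorm_nonneg A
  have := rowOneTwoNorm_nonneg B
  rw [Matrix.add_apply]
  refine (abs_add_le _ _).trans ?_
  nlinarith

lemma readoutLogits_sub_readoutLogits {L d n : ℕ} (τ : ℝ) (X X' : Matrix (Fin L) (Fin d) ℝ)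
    (A A' : Matrix (Fin d) (Fin n) ℝ) (j : Fin n) :
    readoutLogits τ X A j - readoutLogits τ X' A' j
      = 1 / (L * τ) * ∑ i, ((X - X') * A + X' * (A - A')) i j := by
  have hsplit : (X - X') * A + X' * (A - A') = X * A - X' * A' := by
    rw [Matrix.sub_mul, Matrix.mul_sub]; abel
  simp only [hsplit, Matrix.sub_apply, Finset.sum_sub_distrib, mul_sub, readoutLogits,
    Matrix.mul_apply]

lemma abs_one_div_mul_sum_le_div {L : ℕ} {τ C : ℝ} (hτ : 0 < τ) (hC : 0 ≤ C) (a : Fin L → ℝ)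
    (ha : ∀ i, |a i| ≤ C) :
    |1 / (L * τ) * ∑ i, a i| ≤ C / τ := by
  have hsum : |∑ i, a i| ≤ L * C := by
    simpa using (Finset.abs_sum_le_sum_abs _ _).trans
      (Finset.sum_le_card_nsmul univ _ C fun i _ => ha i)
  calc |1 / (L * τ) * ∑ i, a i|
      = 1 / (L * τ) * |∑ i, a i| := by rw [abs_mul, abs_of_nonneg (by positivity)]
    _ ≤ 1 / (L * τ) * (L * C) := by gcongr
    _ = (L / L) * (C / τ) := by ring
    _ ≤ C / τ := mul_le_of_le_one_left (by positivity) (div_self_le_one _)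

theorem final_layer_tv_bound_general
    {L d dy : ℕ}
    (τ : ℝ) (hτ0 : 0 < τ)
    (X X' : Matrix (Fin L) (Fin d) ℝ)
    (hX' : ∀ i, Real.sqrt (∑ j, (X' i j) ^ 2) ≤ 1)
    (A A' : Matrix (Fin d) (Fin dy) ℝ) :
    (1 / 2) * ∑ j, |softmaxVec (readoutLogits τ X A) j
        - softmaxVec (readoutLogits τ X' A') j|
      ≤ (2 / τ) * (rowOneTwoNorm A * maxRowEuclideanNorm (X - X')
          + rowOneTwoNorm (A - A')) := by
  set C := rowOneTwoNorm A * maxRowEuclideanNorm (X - X') + rowOneTwoNorm (A - A')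
  have hC : 0 ≤ C := by
    have := rowOneTwoNorm_nonneg A
    have := rowOneTwoNorm_nonneg (A - A')
    have := maxRowEuclideanNorm_nonneg (X - X')
    positivity
  have hlogits : ∀ j, |readoutLogits τ X A j - readoutLogits τ X' A' j| ≤ C / τ := fun j => by
    rw [readoutLogits_sub_readoutLogits]
    exact abs_one_div_mul_sum_le_div hτ0 hC _ fun i => abs_mul_add_mul_apply_le (hX' i) A (A - A') j
  have := sum_abs_softmaxVec_sub_le (div_nonneg hC hτ0.le) hlogits
  calc (1 / 2) * ∑ j, |softmaxVec (readoutLogits τ X A) j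
        - softmaxVec (readoutLogits τ X' A') j|
      ≤ (1 / 2) * (4 * (C / τ)) := by gcongr
    _ = (2 / τ) * C := by ring

theorem final_layer_tv_bound
    {L d dy : ℕ} (hL : 1 ≤ L)
    (τ : ℝ) (hτ0 : 0 < τ) (hτ1 : τ ≤ 1)
    (X X' : Matrix (Fin L) (Fin d) ℝ)
    (hX : ∀ i, Real.sqrt (∑ j, (X i j) ^ 2) ≤ 1)
    (hX' : ∀ i, Real.sqrt (∑ j, (X' i j) ^ 2) ≤ 1)
    (A A' : Matrix (Fin d) (Fin dy) ℝ) :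
    (1 / 2) * ∑ j, |softmaxVec (readoutLogits τ X A) j
        - softmaxVec (readoutLogits τ X' A') j|
      ≤ (2 / τ) * (rowOneTwoNorm A * maxRowEuclideanNorm (X - X')
          + rowOneTwoNorm (A - A')) :=
  final_layer_tv_bound_general τ hτ0 X X' hX' A A'
end
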